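/- Let V(ρ) = 72(36 − 14√6 + (√6 − 2)ρ²)/(36 − 14√6 + √6 ρ²)², a₁ = (1/2)√(3/2), a₂ = (1/2)(18 − 7√6). Define 𝐠(ρ) = (a₁ρ² + a₂)^{−2} and 𝐡(ρ) = e^{ρ²/4}( h₁(ρ) + h₂(ρ) e^{−ρ²/4} ∫₀^ρ e^{s²/4} ds ), where h₁(ρ) = (Σ_{j=0}^{3} α_j ρ^{2j})/(20 ρ⁵ (6√6 − 14 + ρ²)²), h₂(ρ) = 2(61 − 24√6)/(5 (6√6 − 14 + ρ²)²), with α₀ = 24(8652√6 − 21193), α₁ = 4(8347 − 3408√6), α₂ = 2(372√6 − 923), α₃ = 15. Then both 𝐠 and 𝐡 solve the differential equation u''(ρ) + (6/ρ) u'(ρ) − (1/2) ρ u'(ρ) + V(ρ) u(ρ) − 2 u(ρ) = 0 on (0,∞), and their Wronskian satisfies 𝐠(ρ)𝐡'(ρ) − 𝐠'(ρ)𝐡(ρ) = ρ^{−6} e^{ρ²/4} for all ρ > 0. -/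

import Mathlib

open Set MeasureTheory

noncomputable section

/-- The potential `V(ρ) = 72(36 − 14√6 + (√6 − 2)ρ²)/(36 − 14√6 + √6 ρ²)²`. -/
def Vpot (ρ : ℝ) : ℝ :=
  72 * (36 - 14 * Real.sqrt 6 + (Real.sqrt 6 - 2) * ρ^2) /
    (36 - 14 * Real.sqrt 6 + Real.sqrt 6 * ρ^2)^2

/-- `a₁ = (1/2)√(3/2)`. -/
def a1 : ℝ := (1/2) * Real.sqrt (3/2)

/-- `a₂ = (1/2)(18 − 7√6)`. -/
def a2 : ℝ := (1/2) * (18 - 7 * Real.sqrt 6)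

/-- The symmetry mode `𝐠(ρ) = (a₁ρ² + a₂)^{−2}`. -/
def gsym (ρ : ℝ) : ℝ := 1 / (a1 * ρ^2 + a2)^2

/-- `h₁(ρ) = (α₀ + α₁ρ² + α₂ρ⁴ + α₃ρ⁶)/(20ρ⁵(6√6 − 14 + ρ²)²)`. -/
def h1f (ρ : ℝ) : ℝ :=
  (24 * (8652 * Real.sqrt 6 - 21193) + 4 * (8347 - 3408 * Real.sqrt 6) * ρ^2
    + 2 * (372 * Real.sqrt 6 - 923) * ρ^4 + 15 * ρ^6) /
  (20 * ρ^5 * (6 * Real.sqrt 6 - 14 + ρ^2)^2)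

/-- `h₂(ρ) = 2(61 − 24√6)/(5(6√6 − 14 + ρ²)²)`. -/
def h2f (ρ : ℝ) : ℝ := 2 * (61 - 24 * Real.sqrt 6) / (5 * (6 * Real.sqrt 6 - 14 + ρ^2)^2)

/-- The second solution `𝐡(ρ) = e^{ρ²/4}(h₁(ρ) + h₂(ρ) e^{−ρ²/4} ∫₀^ρ e^{s²/4} ds)`. -/
def hsym (ρ : ℝ) : ℝ :=
  Real.exp (ρ^2/4) *
    (h1f ρ + h2f ρ * Real.exp (-ρ^2/4) * ∫ s in (0:ℝ)..ρ, Real.exp (s^2/4))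

private lemma hs2 : Real.sqrt 6 ^ 2 = 6 := Real.sq_sqrt (by norm_num)

private lemma hp6_3 : Real.sqrt 6 ^ 3 = 6 * Real.sqrt 6 := by
  rw [show Real.sqrt 6 ^ 3 = (Real.sqrt 6 ^ 2) ^ 1 * Real.sqrt 6 ^ 1 by ring, hs2]; norm_num

private lemma hp6_4 : Real.sqrt 6 ^ 4 = 36 := by
  rw [show Real.sqrt 6 ^ 4 = (Real.sqrt 6 ^ 2) ^ 2 * Real.sqrt 6 ^ 0 by ring, hs2]; norm_num

private lemma hp6_5 : Real.sqrt 6 ^ 5 = 36 * Real.sqrt 6 := by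
  rw [show Real.sqrt 6 ^ 5 = (Real.sqrt 6 ^ 2) ^ 2 * Real.sqrt 6 ^ 1 by ring, hs2]; norm_num

private lemma hp6_6 : Real.sqrt 6 ^ 6 = 216 := by
  rw [show Real.sqrt 6 ^ 6 = (Real.sqrt 6 ^ 2) ^ 3 * Real.sqrt 6 ^ 0 by ring, hs2]; norm_num

private lemma hp6_7 : Real.sqrt 6 ^ 7 = 216 * Real.sqrt 6 := by
  rw [show Real.sqrt 6 ^ 7 = (Real.sqrt 6 ^ 2) ^ 3 * Real.sqrt 6 ^ 1 by ring, hs2]; norm_num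

private lemma hp6_8 : Real.sqrt 6 ^ 8 = 1296 := by
  rw [show Real.sqrt 6 ^ 8 = (Real.sqrt 6 ^ 2) ^ 4 * Real.sqrt 6 ^ 0 by ring, hs2]; norm_num

private lemma hp6_9 : Real.sqrt 6 ^ 9 = 1296 * Real.sqrt 6 := by
  rw [show Real.sqrt 6 ^ 9 = (Real.sqrt 6 ^ 2) ^ 4 * Real.sqrt 6 ^ 1 by ring, hs2]; norm_num

private lemma hp6_10 : Real.sqrt 6 ^ 10 = 7776 := by
  rw [show Real.sqrt 6 ^ 10 = (Real.sqrt 6 ^ 2) ^ 5 * Real.sqrt 6 ^ 0 by ring, hs2]; norm_num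

private lemma hp6_11 : Real.sqrt 6 ^ 11 = 7776 * Real.sqrt 6 := by
  rw [show Real.sqrt 6 ^ 11 = (Real.sqrt 6 ^ 2) ^ 5 * Real.sqrt 6 ^ 1 by ring, hs2]; norm_num

private lemma hp6_12 : Real.sqrt 6 ^ 12 = 46656 := by
  rw [show Real.sqrt 6 ^ 12 = (Real.sqrt 6 ^ 2) ^ 6 * Real.sqrt 6 ^ 0 by ring, hs2]; norm_num

private lemma hp6_13 : Real.sqrt 6 ^ 13 = 46656 * Real.sqrt 6 := by
  rw [show Real.sqrt 6 ^ 13 = (Real.sqrt 6 ^ 2) ^ 6 * Real.sqrt 6 ^ 1 by ring, hs2]; norm_num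

private lemma hp6_14 : Real.sqrt 6 ^ 14 = 279936 := by
  rw [show Real.sqrt 6 ^ 14 = (Real.sqrt 6 ^ 2) ^ 7 * Real.sqrt 6 ^ 0 by ring, hs2]; norm_num

private lemma hp6_15 : Real.sqrt 6 ^ 15 = 279936 * Real.sqrt 6 := by
  rw [show Real.sqrt 6 ^ 15 = (Real.sqrt 6 ^ 2) ^ 7 * Real.sqrt 6 ^ 1 by ring, hs2]; norm_num

private lemma hp6_16 : Real.sqrt 6 ^ 16 = 1679616 := by
  rw [show Real.sqrt 6 ^ 16 = (Real.sqrt 6 ^ 2) ^ 8 * Real.sqrt 6 ^ 0 by ring, hs2]; norm_num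

private lemma hp6_17 : Real.sqrt 6 ^ 17 = 1679616 * Real.sqrt 6 := by
  rw [show Real.sqrt 6 ^ 17 = (Real.sqrt 6 ^ 2) ^ 8 * Real.sqrt 6 ^ 1 by ring, hs2]; norm_num

private lemma hp6_18 : Real.sqrt 6 ^ 18 = 10077696 := by
  rw [show Real.sqrt 6 ^ 18 = (Real.sqrt 6 ^ 2) ^ 9 * Real.sqrt 6 ^ 0 by ring, hs2]; norm_num

private lemma hp6_19 : Real.sqrt 6 ^ 19 = 10077696 * Real.sqrt 6 := by
  rw [show Real.sqrt 6 ^ 19 = (Real.sqrt 6 ^ 2) ^ 9 * Real.sqrt 6 ^ 1 by ring, hs2]; norm_num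

private lemma hp6_20 : Real.sqrt 6 ^ 20 = 60466176 := by
  rw [show Real.sqrt 6 ^ 20 = (Real.sqrt 6 ^ 2) ^ 10 * Real.sqrt 6 ^ 0 by ring, hs2]; norm_num

private lemma hp6_21 : Real.sqrt 6 ^ 21 = 60466176 * Real.sqrt 6 := by
  rw [show Real.sqrt 6 ^ 21 = (Real.sqrt 6 ^ 2) ^ 10 * Real.sqrt 6 ^ 1 by ring, hs2]; norm_num

private lemma hp6_22 : Real.sqrt 6 ^ 22 = 362797056 := by
  rw [show Real.sqrt 6 ^ 22 = (Real.sqrt 6 ^ 2) ^ 11 * Real.sqrt 6 ^ 0 by ring, hs2]; norm_num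

private lemma hp6_23 : Real.sqrt 6 ^ 23 = 362797056 * Real.sqrt 6 := by
  rw [show Real.sqrt 6 ^ 23 = (Real.sqrt 6 ^ 2) ^ 11 * Real.sqrt 6 ^ 1 by ring, hs2]; norm_num

private lemma hp6_24 : Real.sqrt 6 ^ 24 = 2176782336 := by
  rw [show Real.sqrt 6 ^ 24 = (Real.sqrt 6 ^ 2) ^ 12 * Real.sqrt 6 ^ 0 by ring, hs2]; norm_num

private lemma hp6_25 : Real.sqrt 6 ^ 25 = 2176782336 * Real.sqrt 6 := by
  rw [show Real.sqrt 6 ^ 25 = (Real.sqrt 6 ^ 2) ^ 12 * Real.sqrt 6 ^ 1 by ring, hs2]; norm_num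

private lemma hp6_26 : Real.sqrt 6 ^ 26 = 13060694016 := by
  rw [show Real.sqrt 6 ^ 26 = (Real.sqrt 6 ^ 2) ^ 13 * Real.sqrt 6 ^ 0 by ring, hs2]; norm_num

private lemma hp6_27 : Real.sqrt 6 ^ 27 = 13060694016 * Real.sqrt 6 := by
  rw [show Real.sqrt 6 ^ 27 = (Real.sqrt 6 ^ 2) ^ 13 * Real.sqrt 6 ^ 1 by ring, hs2]; norm_num

private lemma hp6_28 : Real.sqrt 6 ^ 28 = 78364164096 := by
  rw [show Real.sqrt 6 ^ 28 = (Real.sqrt 6 ^ 2) ^ 14 * Real.sqrt 6 ^ 0 by ring, hs2]; norm_num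

private lemma hp6_29 : Real.sqrt 6 ^ 29 = 78364164096 * Real.sqrt 6 := by
  rw [show Real.sqrt 6 ^ 29 = (Real.sqrt 6 ^ 2) ^ 14 * Real.sqrt 6 ^ 1 by ring, hs2]; norm_num

private lemma hp6_30 : Real.sqrt 6 ^ 30 = 470184984576 := by
  rw [show Real.sqrt 6 ^ 30 = (Real.sqrt 6 ^ 2) ^ 15 * Real.sqrt 6 ^ 0 by ring, hs2]; norm_num

private lemma hp6_31 : Real.sqrt 6 ^ 31 = 470184984576 * Real.sqrt 6 := by
  rw [show Real.sqrt 6 ^ 31 = (Real.sqrt 6 ^ 2) ^ 15 * Real.sqrt 6 ^ 1 by ring, hs2]; norm_num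

private lemma hp6_32 : Real.sqrt 6 ^ 32 = 2821109907456 := by
  rw [show Real.sqrt 6 ^ 32 = (Real.sqrt 6 ^ 2) ^ 16 * Real.sqrt 6 ^ 0 by ring, hs2]; norm_num

private lemma hp6_33 : Real.sqrt 6 ^ 33 = 2821109907456 * Real.sqrt 6 := by
  rw [show Real.sqrt 6 ^ 33 = (Real.sqrt 6 ^ 2) ^ 16 * Real.sqrt 6 ^ 1 by ring, hs2]; norm_num

private lemma hp6_34 : Real.sqrt 6 ^ 34 = 16926659444736 := by
  rw [show Real.sqrt 6 ^ 34 = (Real.sqrt 6 ^ 2) ^ 17 * Real.sqrt 6 ^ 0 by ring, hs2]; norm_num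

private lemma hp6_35 : Real.sqrt 6 ^ 35 = 16926659444736 * Real.sqrt 6 := by
  rw [show Real.sqrt 6 ^ 35 = (Real.sqrt 6 ^ 2) ^ 17 * Real.sqrt 6 ^ 1 by ring, hs2]; norm_num

private lemma hp6_36 : Real.sqrt 6 ^ 36 = 101559956668416 := by
  rw [show Real.sqrt 6 ^ 36 = (Real.sqrt 6 ^ 2) ^ 18 * Real.sqrt 6 ^ 0 by ring, hs2]; norm_num

private lemma hp6_37 : Real.sqrt 6 ^ 37 = 101559956668416 * Real.sqrt 6 := by
  rw [show Real.sqrt 6 ^ 37 = (Real.sqrt 6 ^ 2) ^ 18 * Real.sqrt 6 ^ 1 by ring, hs2]; norm_num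

private lemma hp6_38 : Real.sqrt 6 ^ 38 = 609359740010496 := by
  rw [show Real.sqrt 6 ^ 38 = (Real.sqrt 6 ^ 2) ^ 19 * Real.sqrt 6 ^ 0 by ring, hs2]; norm_num

private lemma hp6_39 : Real.sqrt 6 ^ 39 = 609359740010496 * Real.sqrt 6 := by
  rw [show Real.sqrt 6 ^ 39 = (Real.sqrt 6 ^ 2) ^ 19 * Real.sqrt 6 ^ 1 by ring, hs2]; norm_num

private lemma hp6_40 : Real.sqrt 6 ^ 40 = 3656158440062976 := by
  rw [show Real.sqrt 6 ^ 40 = (Real.sqrt 6 ^ 2) ^ 20 * Real.sqrt 6 ^ 0 by ring, hs2]; norm_num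

private lemma hslb : (2.4:ℝ) < Real.sqrt 6 := by
  nlinarith [Real.sqrt_nonneg 6, hs2]

private lemma hsub : Real.sqrt 6 < 2.5 := by
  nlinarith [Real.sqrt_nonneg 6, hs2]

private lemma ha1 : a1 = Real.sqrt 6 / 4 := by
  unfold a1
  rw [show (3/2:ℝ) = 6/4 by norm_num, Real.sqrt_div (by norm_num) 4,
    show Real.sqrt 4 = 2 by rw [show (4:ℝ) = 2^2 by norm_num, Real.sqrt_sq (by norm_num)]]
  ring

private lemma hden_pos (ρ : ℝ) : 0 < a1 * ρ^2 + a2 := by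
  rw [ha1]; unfold a2
  nlinarith [sq_nonneg ρ, hslb, hsub, Real.sqrt_nonneg 6]

private lemma hD_pos (ρ : ℝ) : 0 < 6 * Real.sqrt 6 - 14 + ρ^2 := by
  nlinarith [sq_nonneg ρ, hslb]

private lemma hV_pos (ρ : ℝ) : 0 < 36 - 14 * Real.sqrt 6 + Real.sqrt 6 * ρ^2 := by
  nlinarith [sq_nonneg ρ, hslb, hsub]

/-- first derivative of gsym -/
def Gd (ρ : ℝ) : ℝ := -4 * a1 * ρ / (a1 * ρ^2 + a2)^3

/-- second derivative of gsym -/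
def Gdd (ρ : ℝ) : ℝ := (24 * a1^2 * ρ^2 - 4 * a1 * (a1 * ρ^2 + a2)) / (a1 * ρ^2 + a2)^4

def H1d (ρ : ℝ) : ℝ :=
  ((-72980880 + 29794320 * Real.sqrt 6) + (7452240 - 3042360 * Real.sqrt 6) * ρ^2
    + (-286344 + 116916 * Real.sqrt 6) * ρ^4 + (9020 - 3630 * Real.sqrt 6) * ρ^6 - 45 * ρ^8)
  / (20 * ρ^6 * (6 * Real.sqrt 6 - 14 + ρ^2)^3)

def H1dd (ρ : ℝ) : ℝ :=
  ((-12565967040 + 5130034560 * Real.sqrt 6) + (1731195840 - 706757760 * Real.sqrt 6) * ρ^2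
    + (-90957984 + 37133376 * Real.sqrt 6) * ρ^4 + (2290752 - 935328 * Real.sqrt 6) * ρ^6
    + (-52860 + 21240 * Real.sqrt 6) * ρ^8 + 180 * ρ^10)
  / (20 * ρ^7 * (6 * Real.sqrt 6 - 14 + ρ^2)^4)

def H2d (ρ : ℝ) : ℝ := -8 * (61 - 24 * Real.sqrt 6) * ρ / (5 * (6 * Real.sqrt 6 - 14 + ρ^2)^3)

def H2dd (ρ : ℝ) : ℝ :=
  8 * (61 - 24 * Real.sqrt 6) * (5 * ρ^2 + 14 - 6 * Real.sqrt 6) / (5 * (6 * Real.sqrt 6 - 14 + ρ^2)^4)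

def Iint (ρ : ℝ) : ℝ := ∫ s in (0:ℝ)..ρ, Real.exp (s^2/4)

def Hd (ρ : ℝ) : ℝ :=
  Real.exp (ρ^2/4) * ((ρ/2) * h1f ρ + H1d ρ + h2f ρ) + H2d ρ * Iint ρ

def Hdd (ρ : ℝ) : ℝ :=
  Real.exp (ρ^2/4) * ((1/2 + ρ^2/4) * h1f ρ + ρ * H1d ρ + H1dd ρ + (ρ/2) * h2f ρ + 2 * H2d ρ)
    + H2dd ρ * Iint ρ

private lemma hA1 (ρ : ℝ) : a1 * ρ^2 + a2 = Real.sqrt 6 / 4 * (6 * Real.sqrt 6 - 14 + ρ^2) := by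
  rw [ha1]; unfold a2; linear_combination (-3/2:ℝ) * hs2

private lemma Vpot_eq (ρ : ℝ) : Vpot ρ
    = 12 * (36 - 14 * Real.sqrt 6 + (Real.sqrt 6 - 2) * ρ^2) / (6 * Real.sqrt 6 - 14 + ρ^2)^2 := by
  have hs0 : Real.sqrt 6 ≠ 0 := (Real.sqrt_pos.mpr (by norm_num)).ne'
  have hD := (hD_pos ρ).ne'
  have hQ : (36 - 14 * Real.sqrt 6 + Real.sqrt 6 * ρ^2)
      = Real.sqrt 6 * (6 * Real.sqrt 6 - 14 + ρ^2) := by linear_combination (-6:ℝ) * hs2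
  unfold Vpot
  rw [hQ]
  have hD' : Real.sqrt 6 * 6 - 14 + ρ^2 ≠ 0 := by rw [mul_comm]; exact hD
  field_simp
  ring_nf; simp only [hs2, hp6_3, hp6_4, hp6_5, hp6_6, hp6_7, hp6_8, hp6_9, hp6_10, hp6_11, hp6_12, hp6_13, hp6_14, hp6_15, hp6_16, hp6_17, hp6_18, hp6_19, hp6_20, hp6_21, hp6_22, hp6_23, hp6_24, hp6_25, hp6_26, hp6_27, hp6_28, hp6_29, hp6_30, hp6_31, hp6_32, hp6_33, hp6_34, hp6_35, hp6_36, hp6_37, hp6_38, hp6_39, hp6_40]; ring_nf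

private lemma gsym_eq (ρ : ℝ) : gsym ρ = 8 / (3 * (6 * Real.sqrt 6 - 14 + ρ^2)^2) := by
  have hs0 : Real.sqrt 6 ≠ 0 := (Real.sqrt_pos.mpr (by norm_num)).ne'
  have hD := (hD_pos ρ).ne'
  unfold gsym
  rw [hA1]
  have hD' : Real.sqrt 6 * 6 - 14 + ρ^2 ≠ 0 := by rw [mul_comm]; exact hD
  field_simp
  ring_nf; simp only [hs2, hp6_3, hp6_4, hp6_5, hp6_6, hp6_7, hp6_8, hp6_9, hp6_10, hp6_11, hp6_12, hp6_13, hp6_14, hp6_15, hp6_16, hp6_17, hp6_18, hp6_19, hp6_20, hp6_21, hp6_22, hp6_23, hp6_24, hp6_25, hp6_26, hp6_27, hp6_28, hp6_29, hp6_30, hp6_31, hp6_32, hp6_33, hp6_34, hp6_35, hp6_36, hp6_37, hp6_38, hp6_39, hp6_40]; ring_nf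

private lemma Gd_eq (ρ : ℝ) : Gd ρ = -32 * ρ / (3 * (6 * Real.sqrt 6 - 14 + ρ^2)^3) := by
  have hs0 : Real.sqrt 6 ≠ 0 := (Real.sqrt_pos.mpr (by norm_num)).ne'
  have hD := (hD_pos ρ).ne'
  unfold Gd
  rw [hA1, ha1]
  have hD' : Real.sqrt 6 * 6 - 14 + ρ^2 ≠ 0 := by rw [mul_comm]; exact hD
  field_simp
  ring_nf; simp only [hs2, hp6_3, hp6_4, hp6_5, hp6_6, hp6_7, hp6_8, hp6_9, hp6_10, hp6_11, hp6_12, hp6_13, hp6_14, hp6_15, hp6_16, hp6_17, hp6_18, hp6_19, hp6_20, hp6_21, hp6_22, hp6_23, hp6_24, hp6_25, hp6_26, hp6_27, hp6_28, hp6_29, hp6_30, hp6_31, hp6_32, hp6_33, hp6_34, hp6_35, hp6_36, hp6_37, hp6_38, hp6_39, hp6_40]; ring_nf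

private lemma Gdd_eq (ρ : ℝ) : Gdd ρ
    = (64 * ρ^2 - (32/3) * (6 * Real.sqrt 6 - 14 + ρ^2)) / (6 * Real.sqrt 6 - 14 + ρ^2)^4 := by
  have hs0 : Real.sqrt 6 ≠ 0 := (Real.sqrt_pos.mpr (by norm_num)).ne'
  have hD := (hD_pos ρ).ne'
  unfold Gdd
  rw [hA1, ha1]
  have hD' : Real.sqrt 6 * 6 - 14 + ρ^2 ≠ 0 := by rw [mul_comm]; exact hD
  field_simp
  ring_nf; simp only [hs2, hp6_3, hp6_4, hp6_5, hp6_6, hp6_7, hp6_8, hp6_9, hp6_10, hp6_11, hp6_12, hp6_13, hp6_14, hp6_15, hp6_16, hp6_17, hp6_18, hp6_19, hp6_20, hp6_21, hp6_22, hp6_23, hp6_24, hp6_25, hp6_26, hp6_27, hp6_28, hp6_29, hp6_30, hp6_31, hp6_32, hp6_33, hp6_34, hp6_35, hp6_36, hp6_37, hp6_38, hp6_39, hp6_40]; ring_nf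

private lemma hasDerivAt_base (ρ : ℝ) : HasDerivAt (fun x : ℝ => a1 * x^2 + a2) (2 * a1 * ρ) ρ := by
  have h := ((hasDerivAt_pow 2 ρ).const_mul a1).add_const a2
  convert h using 1 <;> try rfl
  all_goals push_cast; ring

private lemma hasDerivAt_gsym (ρ : ℝ) : HasDerivAt gsym (Gd ρ) ρ := by
  have hden := (hden_pos ρ).ne'
  have h := (hasDerivAt_const ρ (1:ℝ)).div ((hasDerivAt_base ρ).pow 2) (pow_ne_zero 2 hden)
  have he : gsym = fun x : ℝ => 1 / (a1 * x^2 + a2)^2 := rfl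
  rw [he]
  convert h using 1 <;> try rfl
  unfold Gd
  push_cast [Pi.pow_apply]
  rw [div_eq_div_iff (pow_ne_zero 3 hden) (pow_ne_zero 2 (pow_ne_zero 2 hden))]
  ring

private lemma hasDerivAt_Gd (ρ : ℝ) : HasDerivAt Gd (Gdd ρ) ρ := by
  have hden := (hden_pos ρ).ne'
  have hnum : HasDerivAt (fun x : ℝ => -4 * a1 * x) (-4 * a1) ρ := by
    simpa using (hasDerivAt_id ρ).const_mul (-4 * a1)
  have h := hnum.div ((hasDerivAt_base ρ).pow 3) (pow_ne_zero 3 hden)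
  have he : Gd = fun x : ℝ => -4 * a1 * x / (a1 * x^2 + a2)^3 := rfl
  rw [he]
  convert h using 1 <;> try rfl
  unfold Gdd
  push_cast [Pi.pow_apply]
  rw [div_eq_div_iff (pow_ne_zero 4 hden) (pow_ne_zero 2 (pow_ne_zero 3 hden))]
  ring

private lemma hasDerivAt_D6 (ρ : ℝ) :
    HasDerivAt (fun x : ℝ => 6 * Real.sqrt 6 - 14 + x^2) (2 * ρ) ρ := by
  have h := (hasDerivAt_pow 2 ρ).const_add (6 * Real.sqrt 6 - 14)
  convert h using 1 <;> try rfl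
  all_goals push_cast; ring

private lemma hasDerivAt_h1f {ρ : ℝ} (hρ : 0 < ρ) : HasDerivAt h1f (H1d ρ) ρ := by
  have hD := (hD_pos ρ).ne'
  have hρ' := hρ.ne'
  have hnum : HasDerivAt (fun x : ℝ =>
      24 * (8652 * Real.sqrt 6 - 21193) + 4 * (8347 - 3408 * Real.sqrt 6) * x^2
        + 2 * (372 * Real.sqrt 6 - 923) * x^4 + 15 * x^6)
      (4 * (8347 - 3408 * Real.sqrt 6) * (2 * ρ) + 2 * (372 * Real.sqrt 6 - 923) * (4 * ρ^3)
        + 15 * (6 * ρ^5)) ρ := by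
    have h := ((((hasDerivAt_pow 2 ρ).const_mul (4 * (8347 - 3408 * Real.sqrt 6))).add
      ((hasDerivAt_pow 4 ρ).const_mul (2 * (372 * Real.sqrt 6 - 923)))).add
      ((hasDerivAt_pow 6 ρ).const_mul 15)).const_add (24 * (8652 * Real.sqrt 6 - 21193))
    convert h using 1 <;> try rfl
    all_goals try funext x
    all_goals push_cast [Pi.add_apply, Pi.sub_apply, Pi.mul_apply, Pi.pow_apply]; ring
  have hden : HasDerivAt (fun x : ℝ => 20 * x^5 * (6 * Real.sqrt 6 - 14 + x^2)^2)
      (20 * (5 * ρ^4) * (6 * Real.sqrt 6 - 14 + ρ^2)^2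
        + 20 * ρ^5 * (2 * (6 * Real.sqrt 6 - 14 + ρ^2) * (2 * ρ))) ρ := by
    have h := (((hasDerivAt_pow 5 ρ).const_mul 20).mul ((hasDerivAt_D6 ρ).pow 2))
    convert h using 1 <;> try rfl
    all_goals try funext x
    all_goals push_cast [Pi.add_apply, Pi.sub_apply, Pi.mul_apply, Pi.pow_apply]; ring
  have hdne : (20 * ρ^5 * (6 * Real.sqrt 6 - 14 + ρ^2)^2) ≠ 0 :=
    mul_ne_zero (mul_ne_zero (by norm_num) (pow_ne_zero 5 hρ')) (pow_ne_zero 2 hD)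
  have h := hnum.div hden hdne
  have he : h1f = fun x : ℝ =>
      (24 * (8652 * Real.sqrt 6 - 21193) + 4 * (8347 - 3408 * Real.sqrt 6) * x^2
        + 2 * (372 * Real.sqrt 6 - 923) * x^4 + 15 * x^6)
      / (20 * x^5 * (6 * Real.sqrt 6 - 14 + x^2)^2) := rfl
  rw [he]
  convert h using 1 <;> try rfl
  unfold H1d
  rw [div_eq_div_iff
    (mul_ne_zero (mul_ne_zero (by norm_num) (pow_ne_zero 6 hρ')) (pow_ne_zero 3 hD))
    (pow_ne_zero 2 hdne)]
  linear_combination (norm := ring1) ((95724066816000:ℝ) * ρ ^ 10 + (-31120279142400:ℝ) * ρ ^ 12 + (4076222976000:ℝ) * ρ ^ 14 + (-274563072000:ℝ) * ρ ^ 16 + (10088064000:ℝ) * ρ ^ 18 + (-198144000:ℝ) * ρ ^ 20 + (1785600:ℝ) * ρ ^ 22 + (-164098400256000:ℝ) * Real.sqrt 6 ^ 1 * ρ ^ 10 + (41627735654400:ℝ) * Real.sqrt 6 ^ 1 * ρ ^ 12 + (-4014401126400:ℝ) * Real.sqrt 6 ^ 1 * ρ ^ 14 + (183936614400:ℝ)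 * Real.sqrt 6 ^ 1 * ρ ^ 16 + (-4155494400:ℝ) * Real.sqrt 6 ^ 1 * ρ ^ 18 + (42854400:ℝ) * Real.sqrt 6 ^ 1 * ρ ^ 20 + (105491828736000:ℝ) * Real.sqrt 6 ^ 2 * ρ ^ 10 + (-19225556582400:ℝ) * Real.sqrt 6 ^ 2 * ρ ^ 12 + (1207432396800:ℝ) * Real.sqrt 6 ^ 2 * ρ ^ 14 + (-31999795200:ℝ) * Real.sqrt 6 ^ 2 * ρ ^ 16 + (385689600:ℝ) * Real.sqrt 6 ^ 2 * ρ ^ 18 + (-30140522496000:ℝ) * Real.sqrt 6 ^ 3 * ρ ^ 10 + (3340121702400:ℝ) * Real.sqrt 6 ^ 3 * ρ ^ 12 + (-106400563200:ℝ) * Real.sqrt 6 ^ 3 * ρ ^ 14 + (1542758400:ℝ) * Real.sqrt 6 ^ 3 * ρ ^ 16 + (3229341696000:ℝ) * Real.sqrt 6 ^ 4 * ρ ^ 10 + (-127202918400:ℝ) * Real.sqrt 6 ^ 4 * ρ ^ 12 + (2314137600:ℝ) * Real.sqrt 6 ^ 4 * ρ ^ 14) * hs2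

private lemma hasDerivAt_H1d {ρ : ℝ} (hρ : 0 < ρ) : HasDerivAt H1d (H1dd ρ) ρ := by
  have hD := (hD_pos ρ).ne'
  have hρ' := hρ.ne'
  have hnum : HasDerivAt (fun x : ℝ =>
      (-72980880 + 29794320 * Real.sqrt 6) + (7452240 - 3042360 * Real.sqrt 6) * x^2
        + (-286344 + 116916 * Real.sqrt 6) * x^4 + (9020 - 3630 * Real.sqrt 6) * x^6 - 45 * x^8)
      ((7452240 - 3042360 * Real.sqrt 6) * (2 * ρ) + (-286344 + 116916 * Real.sqrt 6) * (4 * ρ^3)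
        + (9020 - 3630 * Real.sqrt 6) * (6 * ρ^5) - 45 * (8 * ρ^7)) ρ := by
    have h := (((((hasDerivAt_pow 2 ρ).const_mul (7452240 - 3042360 * Real.sqrt 6)).add
      ((hasDerivAt_pow 4 ρ).const_mul (-286344 + 116916 * Real.sqrt 6))).add
      ((hasDerivAt_pow 6 ρ).const_mul (9020 - 3630 * Real.sqrt 6))).sub
      ((hasDerivAt_pow 8 ρ).const_mul 45)).const_add (-72980880 + 29794320 * Real.sqrt 6)
    convert h using 1 <;> try rfl
    all_goals try funext x
    all_goals push_cast [Pi.add_apply, Pi.sub_apply, Pi.mul_apply, Pi.pow_apply]; ring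
  have hden : HasDerivAt (fun x : ℝ => 20 * x^6 * (6 * Real.sqrt 6 - 14 + x^2)^3)
      (20 * (6 * ρ^5) * (6 * Real.sqrt 6 - 14 + ρ^2)^3
        + 20 * ρ^6 * (3 * (6 * Real.sqrt 6 - 14 + ρ^2)^2 * (2 * ρ))) ρ := by
    have h := (((hasDerivAt_pow 6 ρ).const_mul 20).mul ((hasDerivAt_D6 ρ).pow 3))
    convert h using 1 <;> try rfl
    all_goals try funext x
    all_goals push_cast; ring
  have hdne : (20 * ρ^6 * (6 * Real.sqrt 6 - 14 + ρ^2)^3) ≠ 0 :=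
    mul_ne_zero (mul_ne_zero (by norm_num) (pow_ne_zero 6 hρ')) (pow_ne_zero 3 hD)
  have h := hnum.div hden hdne
  have he : H1d = fun x : ℝ =>
      ((-72980880 + 29794320 * Real.sqrt 6) + (7452240 - 3042360 * Real.sqrt 6) * x^2
        + (-286344 + 116916 * Real.sqrt 6) * x^4 + (9020 - 3630 * Real.sqrt 6) * x^6 - 45 * x^8)
      / (20 * x^6 * (6 * Real.sqrt 6 - 14 + x^2)^3) := rfl
  rw [he]
  convert h using 1 <;> try rfl
  unfold H1dd
  rw [div_eq_div_iff
    (mul_ne_zero (mul_ne_zero (by norm_num) (pow_ne_zero 7 hρ')) (pow_ne_zero 4 hD))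
    (pow_ne_zero 2 hdne)]
  linear_combination (norm := ring1) ((3230458632511488000:ℝ) * ρ ^ 12 + (-1604394838867968000:ℝ) * ρ ^ 14 + (345702771825868800:ℝ) * ρ ^ 16 + (-42186610955059200:ℝ) * ρ ^ 18 + (3187617656832000:ℝ) * ρ ^ 20 + (-152705258496000:ℝ) * ρ ^ 22 + (4532315904000:ℝ) * ρ ^ 24 + (-76347187200:ℝ) * ρ ^ 26 + (561196800:ℝ) * ρ ^ 28 + (-8306893626458112000:ℝ) * Real.sqrt 6 ^ 1 * ρ ^ 12 + (3532237183770624000:ℝ) * Real.sqrt 6 ^ 1 * ρ ^ 14 + (-636647328711475200:ℝ) * Real.sqrt 6 ^ 1 * ρ ^ 16 + (63005047547904000:ℝ) * Real.sqrt 6 ^ 1 * ρ ^ 18 + (-3696370578432000:ℝ) * Real.sqrt 6 ^ 1 * ρ ^ 20 + (128644194816000:ℝ) * Real.sqrt 6 ^ 1 * ρ ^ 22 + (-2465655552000:ℝ) * Real.sqrt 6 ^ 1 * ρ ^ 24 + (20203084800:ℝ) * Real.sqrt 6 ^ 1 * ρ ^ 26 + (8900243171205120000:ℝ) * Real.sqrt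 6 ^ 2 * ρ ^ 12 + (-3148808184668160000:ℝ) * Real.sqrt 6 ^ 2 * ρ ^ 14 + (457207267571712000:ℝ) * Real.sqrt 6 ^ 2 * ρ ^ 16 + (-34847746117632000:ℝ) * Real.sqrt 6 ^ 2 * ρ ^ 18 + (1471272325632000:ℝ) * Real.sqrt 6 ^ 2 * ρ ^ 20 + (-32742185472000:ℝ) * Real.sqrt 6 ^ 2 * ρ ^ 22 + (303046272000:ℝ) * Real.sqrt 6 ^ 2 * ρ ^ 24 + (-5085853240688640000:ℝ) * Real.sqrt 6 ^ 3 * ρ ^ 12 + (1436043731189760000:ℝ) * Real.sqrt 6 ^ 3 * ρ ^ 14 + (-158686743527424000:ℝ) * Real.sqrt 6 ^ 3 * ρ ^ 16 + (8578230386688000:ℝ) * Real.sqrt 6 ^ 3 * ρ ^ 18 + (-227996301312000:ℝ) * Real.sqrt 6 ^ 3 * ρ ^ 20 + (2424370176000:ℝ) * Real.sqrt 6 ^ 3 * ρ ^ 22 + (1634738541649920000:ℝ) * Real.sqrt 6 ^ 4 * ρ ^ 12 + (-344818446336000000:ℝ) * Real.sqrt 6 ^ 4 * ρ ^ 14 +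 (26376564252672000:ℝ) * Real.sqrt 6 ^ 4 * ρ ^ 16 + (-873248034816000:ℝ) * Real.sqrt 6 ^ 4 * ρ ^ 18 + (10909665792000:ℝ) * Real.sqrt 6 ^ 4 * ρ ^ 20 + (-280240892854272000:ℝ) * Real.sqrt 6 ^ 5 * ρ ^ 12 + (39094527025152000:ℝ) * Real.sqrt 6 ^ 5 * ρ ^ 14 + (-1729230512947200:ℝ) * Real.sqrt 6 ^ 5 * ρ ^ 16 + (26183197900800:ℝ) * Real.sqrt 6 ^ 5 * ρ ^ 18 + (20017206632448000:ℝ) * Real.sqrt 6 ^ 6 * ρ ^ 12 + (-1362665742336000:ℝ) * Real.sqrt 6 ^ 6 * ρ ^ 14 + (26183197900800:ℝ) * Real.sqrt 6 ^ 6 * ρ ^ 16) * hs2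

private lemma hasDerivAt_h2f (ρ : ℝ) : HasDerivAt h2f (H2d ρ) ρ := by
  have hD := (hD_pos ρ).ne'
  have hden : HasDerivAt (fun x : ℝ => 5 * (6 * Real.sqrt 6 - 14 + x^2)^2)
      (5 * (2 * (6 * Real.sqrt 6 - 14 + ρ^2) * (2 * ρ))) ρ := by
    have h := ((hasDerivAt_D6 ρ).pow 2).const_mul 5
    convert h using 1 <;> try rfl
    all_goals try funext x
    all_goals push_cast; ring
  have hdne : (5 * (6 * Real.sqrt 6 - 14 + ρ^2)^2) ≠ 0 :=
    mul_ne_zero (by norm_num) (pow_ne_zero 2 hD)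
  have h := (hasDerivAt_const ρ (2 * (61 - 24 * Real.sqrt 6))).div hden hdne
  have he : h2f = fun x : ℝ =>
      2 * (61 - 24 * Real.sqrt 6) / (5 * (6 * Real.sqrt 6 - 14 + x^2)^2) := rfl
  rw [he]
  convert h using 1 <;> try rfl
  unfold H2d
  rw [div_eq_div_iff (mul_ne_zero (by norm_num) (pow_ne_zero 3 hD)) (pow_ne_zero 2 hdne)]
  ring

private lemma hasDerivAt_H2d (ρ : ℝ) : HasDerivAt H2d (H2dd ρ) ρ := by
  have hD := (hD_pos ρ).ne'
  have hnum : HasDerivAt (fun x : ℝ => -8 * (61 - 24 * Real.sqrt 6) * x)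
      (-8 * (61 - 24 * Real.sqrt 6)) ρ := by
    simpa using (hasDerivAt_id ρ).const_mul (-8 * (61 - 24 * Real.sqrt 6))
  have hden : HasDerivAt (fun x : ℝ => 5 * (6 * Real.sqrt 6 - 14 + x^2)^3)
      (5 * (3 * (6 * Real.sqrt 6 - 14 + ρ^2)^2 * (2 * ρ))) ρ := by
    have h := ((hasDerivAt_D6 ρ).pow 3).const_mul 5
    convert h using 1 <;> try rfl
    all_goals try funext x
    all_goals push_cast; ring
  have hdne : (5 * (6 * Real.sqrt 6 - 14 + ρ^2)^3) ≠ 0 :=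
    mul_ne_zero (by norm_num) (pow_ne_zero 3 hD)
  have h := hnum.div hden hdne
  have he : H2d = fun x : ℝ =>
      -8 * (61 - 24 * Real.sqrt 6) * x / (5 * (6 * Real.sqrt 6 - 14 + x^2)^3) := rfl
  rw [he]
  convert h using 1 <;> try rfl
  unfold H2dd
  rw [div_eq_div_iff (mul_ne_zero (by norm_num) (pow_ne_zero 4 hD)) (pow_ne_zero 2 hdne)]
  ring

private lemma hasDerivAt_Iint (ρ : ℝ) : HasDerivAt Iint (Real.exp (ρ^2/4)) ρ := by
  have hc : Continuous fun s : ℝ => Real.exp (s^2/4) := by continuity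
  exact intervalIntegral.integral_hasDerivAt_right (hc.intervalIntegrable 0 ρ)
    (hc.stronglyMeasurableAtFilter volume (nhds ρ)) hc.continuousAt

private lemma hasDerivAt_exp4 (ρ : ℝ) :
    HasDerivAt (fun x : ℝ => Real.exp (x^2/4)) ((ρ/2) * Real.exp (ρ^2/4)) ρ := by
  have h := ((hasDerivAt_pow 2 ρ).div_const 4).exp
  convert h using 1 <;> try rfl
  all_goals push_cast; ring

private lemma hsym_eq : hsym = fun ρ : ℝ => Real.exp (ρ^2/4) * h1f ρ + h2f ρ * Iint ρ := by
  funext ρ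
  have h1 : Real.exp (ρ^2/4) * Real.exp (-ρ^2/4) = 1 := by
    rw [← Real.exp_add, show ρ^2/4 + -ρ^2/4 = 0 by ring, Real.exp_zero]
  unfold hsym Iint
  linear_combination (h2f ρ * ∫ s in (0:ℝ)..ρ, Real.exp (s^2/4)) * h1

private lemma hasDerivAt_hsym {ρ : ℝ} (hρ : 0 < ρ) : HasDerivAt hsym (Hd ρ) ρ := by
  rw [hsym_eq]
  have h := ((hasDerivAt_exp4 ρ).mul (hasDerivAt_h1f hρ)).add
    ((hasDerivAt_h2f ρ).mul (hasDerivAt_Iint ρ))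
  convert h using 1 <;> try rfl
  unfold Hd Iint
  ring

private lemma hasDerivAt_Hd {ρ : ℝ} (hρ : 0 < ρ) : HasDerivAt Hd (Hdd ρ) ρ := by
  have hin : HasDerivAt (fun x : ℝ => (x/2) * h1f x + H1d x + h2f x)
      ((1/2) * h1f ρ + (ρ/2) * H1d ρ + H1dd ρ + H2d ρ) ρ := by
    have h := ((((hasDerivAt_id ρ).div_const 2).mul (hasDerivAt_h1f hρ)).add
      (hasDerivAt_H1d hρ)).add (hasDerivAt_h2f ρ)
    convert h using 1 <;> try rfl
    all_goals try funext x
    all_goals try simp only [id_eq]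
    all_goals ring
  have h := ((hasDerivAt_exp4 ρ).mul hin).add ((hasDerivAt_H2d ρ).mul (hasDerivAt_Iint ρ))
  have he : Hd = fun x : ℝ =>
      Real.exp (x^2/4) * ((x/2) * h1f x + H1d x + h2f x) + H2d x * Iint x := rfl
  rw [he]
  convert h using 1 <;> try rfl
  unfold Hdd
  ring

private lemma ode_g {ρ : ℝ} (hρ : 0 < ρ) :
    Gdd ρ + (6/ρ) * Gd ρ - (1/2) * ρ * Gd ρ + Vpot ρ * gsym ρ - 2 * gsym ρ = 0 := by
  have hD := (hD_pos ρ).ne'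
  have hρ' := hρ.ne'
  rw [Gdd_eq, Gd_eq, Vpot_eq, gsym_eq]
  have hD' : Real.sqrt 6 * 6 - 14 + ρ^2 ≠ 0 := by rw [mul_comm]; exact hD
  field_simp
  ring_nf; simp only [hs2, hp6_3, hp6_4, hp6_5, hp6_6, hp6_7, hp6_8, hp6_9, hp6_10, hp6_11, hp6_12, hp6_13, hp6_14, hp6_15, hp6_16, hp6_17, hp6_18, hp6_19, hp6_20, hp6_21, hp6_22, hp6_23, hp6_24, hp6_25, hp6_26, hp6_27, hp6_28, hp6_29, hp6_30, hp6_31, hp6_32, hp6_33, hp6_34, hp6_35, hp6_36, hp6_37, hp6_38, hp6_39, hp6_40]; ring_nf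

private lemma ode_hA {ρ : ℝ} (hρ : 0 < ρ) :
    H2dd ρ + (6/ρ) * H2d ρ - (1/2) * ρ * H2d ρ + Vpot ρ * h2f ρ - 2 * h2f ρ = 0 := by
  have hD := (hD_pos ρ).ne'
  have hρ' := hρ.ne'
  rw [Vpot_eq]
  unfold H2dd H2d h2f
  have hD' : Real.sqrt 6 * 6 - 14 + ρ^2 ≠ 0 := by rw [mul_comm]; exact hD
  field_simp
  ring_nf; simp only [hs2, hp6_3, hp6_4, hp6_5, hp6_6, hp6_7, hp6_8, hp6_9, hp6_10, hp6_11, hp6_12, hp6_13, hp6_14, hp6_15, hp6_16, hp6_17, hp6_18, hp6_19, hp6_20, hp6_21, hp6_22, hp6_23, hp6_24, hp6_25, hp6_26, hp6_27, hp6_28, hp6_29, hp6_30, hp6_31, hp6_32, hp6_33, hp6_34, hp6_35, hp6_36, hp6_37, hp6_38, hp6_39, hp6_40]; ring_nf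

private lemma termE1 {ρ : ℝ} (hρ : 0 < ρ) :
    (1/2 + ρ^2/4) * h1f ρ = (((-209432784) + (85500576) * Real.sqrt 6) * ρ ^ 2 + ((-76371760) + (31178640) * Real.sqrt 6) * ρ ^ 4 + ((12204564) + (-4982496) * Real.sqrt 6) * ρ ^ 6 + ((-911464) + (372096) * Real.sqrt 6) * ρ ^ 8 + ((35073) + (-14322) * Real.sqrt 6) * ρ ^ 10 + ((-559) + (231) * Real.sqrt 6) * ρ ^ 12 + ((15/4)) * ρ ^ 14) / (20 * ρ^7 * (6 * Real.sqrt 6 - 14 + ρ^2)^4) := by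
  have hD := (hD_pos ρ).ne'
  have hρ' := hρ.ne'
  unfold h1f
  have hD' : Real.sqrt 6 * 6 - 14 + ρ^2 ≠ 0 := by rw [mul_comm]; exact hD
  field_simp
  ring_nf; simp only [hs2, hp6_3, hp6_4, hp6_5, hp6_6, hp6_7, hp6_8, hp6_9, hp6_10, hp6_11, hp6_12, hp6_13, hp6_14, hp6_15, hp6_16, hp6_17, hp6_18, hp6_19, hp6_20, hp6_21, hp6_22, hp6_23, hp6_24, hp6_25, hp6_26, hp6_27, hp6_28, hp6_29, hp6_30, hp6_31, hp6_32, hp6_33, hp6_34, hp6_35, hp6_36, hp6_37, hp6_38, hp6_39, hp6_40]; ring_nf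

private lemma termE2 {ρ : ℝ} (hρ : 0 < ρ) :
    ρ * H1d ρ = (((2094327840) + (-855005760) * Real.sqrt 6) * ρ ^ 2 + ((-286837200) + (117100800) * Real.sqrt 6) * ρ ^ 4 + ((15670032) + (-6397248) * Real.sqrt 6) * ρ ^ 6 + ((-543304) + (221856) * Real.sqrt 6) * ρ ^ 8 + ((9650) + (-3900) * Real.sqrt 6) * ρ ^ 10 + ((-45)) * ρ ^ 12) / (20 * ρ^7 * (6 * Real.sqrt 6 - 14 + ρ^2)^4) := by
  have hD := (hD_pos ρ).ne'
  have hρ' := hρ.ne'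
  unfold H1d
  have hD' : Real.sqrt 6 * 6 - 14 + ρ^2 ≠ 0 := by rw [mul_comm]; exact hD
  field_simp
  ring_nf; simp only [hs2, hp6_3, hp6_4, hp6_5, hp6_6, hp6_7, hp6_8, hp6_9, hp6_10, hp6_11, hp6_12, hp6_13, hp6_14, hp6_15, hp6_16, hp6_17, hp6_18, hp6_19, hp6_20, hp6_21, hp6_22, hp6_23, hp6_24, hp6_25, hp6_26, hp6_27, hp6_28, hp6_29, hp6_30, hp6_31, hp6_32, hp6_33, hp6_34, hp6_35, hp6_36, hp6_37, hp6_38, hp6_39, hp6_40]; ring_nf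

private lemma termE3 {ρ : ℝ} (hρ : 0 < ρ) :
    H1dd ρ = (((-12565967040) + (5130034560) * Real.sqrt 6) + ((1731195840) + (-706757760) * Real.sqrt 6) * ρ ^ 2 + ((-90957984) + (37133376) * Real.sqrt 6) * ρ ^ 4 + ((2290752) + (-935328) * Real.sqrt 6) * ρ ^ 6 + ((-52860) + (21240) * Real.sqrt 6) * ρ ^ 8 + ((180)) * ρ ^ 10) / (20 * ρ^7 * (6 * Real.sqrt 6 - 14 + ρ^2)^4) := by
  have hD := (hD_pos ρ).ne'
  have hρ' := hρ.ne'
  unfold H1dd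
  have hD' : Real.sqrt 6 * 6 - 14 + ρ^2 ≠ 0 := by rw [mul_comm]; exact hD
  field_simp
  ring_nf

private lemma termE4 {ρ : ℝ} (hρ : 0 < ρ) :
    (ρ/2) * h2f ρ = (((197296) + (-80544) * Real.sqrt 6) * ρ ^ 8 + ((-13744) + (5616) * Real.sqrt 6) * ρ ^ 10 + ((244) + (-96) * Real.sqrt 6) * ρ ^ 12) / (20 * ρ^7 * (6 * Real.sqrt 6 - 14 + ρ^2)^4) := by
  have hD := (hD_pos ρ).ne'
  have hρ' := hρ.ne'
  unfold h2f
  have hD' : Real.sqrt 6 * 6 - 14 + ρ^2 ≠ 0 := by rw [mul_comm]; exact hD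
  field_simp
  ring_nf; simp only [hs2, hp6_3, hp6_4, hp6_5, hp6_6, hp6_7, hp6_8, hp6_9, hp6_10, hp6_11, hp6_12, hp6_13, hp6_14, hp6_15, hp6_16, hp6_17, hp6_18, hp6_19, hp6_20, hp6_21, hp6_22, hp6_23, hp6_24, hp6_25, hp6_26, hp6_27, hp6_28, hp6_29, hp6_30, hp6_31, hp6_32, hp6_33, hp6_34, hp6_35, hp6_36, hp6_37, hp6_38, hp6_39, hp6_40]; ring_nf

private lemma termE5 {ρ : ℝ} (hρ : 0 < ρ) :
    2 * H2d ρ = (((109952) + (-44928) * Real.sqrt 6) * ρ ^ 8 + ((-3904) + (1536) * Real.sqrt 6) * ρ ^ 10) / (20 * ρ^7 * (6 * Real.sqrt 6 - 14 + ρ^2)^4) := by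
  have hD := (hD_pos ρ).ne'
  have hρ' := hρ.ne'
  unfold H2d
  have hD' : Real.sqrt 6 * 6 - 14 + ρ^2 ≠ 0 := by rw [mul_comm]; exact hD
  field_simp
  ring_nf; simp only [hs2, hp6_3, hp6_4, hp6_5, hp6_6, hp6_7, hp6_8, hp6_9, hp6_10, hp6_11, hp6_12, hp6_13, hp6_14, hp6_15, hp6_16, hp6_17, hp6_18, hp6_19, hp6_20, hp6_21, hp6_22, hp6_23, hp6_24, hp6_25, hp6_26, hp6_27, hp6_28, hp6_29, hp6_30, hp6_31, hp6_32, hp6_33, hp6_34, hp6_35, hp6_36, hp6_37, hp6_38, hp6_39, hp6_40]; ring_nf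

private lemma termE6 {ρ : ℝ} (hρ : 0 < ρ) :
    (6/ρ) * ((ρ/2) * h1f ρ + H1d ρ + h2f ρ) = (((12565967040) + (-5130034560) * Real.sqrt 6) + ((-2977619904) + (1215608256) * Real.sqrt 6) * ρ ^ 2 + ((264087984) + (-107813376) * Real.sqrt 6) * ρ ^ 4 + ((-12698784) + (5184576) * Real.sqrt 6) * ρ ^ 6 + ((327444) + (-133416) * Real.sqrt 6) * ρ ^ 8 + ((-4140) + (1620) * Real.sqrt 6) * ρ ^ 10 + ((45)) * ρ ^ 12) / (20 * ρ^7 * (6 * Real.sqrt 6 - 14 + ρ^2)^4) := by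
  have hD := (hD_pos ρ).ne'
  have hρ' := hρ.ne'
  unfold h1f H1d h2f
  have hD' : Real.sqrt 6 * 6 - 14 + ρ^2 ≠ 0 := by rw [mul_comm]; exact hD
  field_simp
  ring_nf; simp only [hs2, hp6_3, hp6_4, hp6_5, hp6_6, hp6_7, hp6_8, hp6_9, hp6_10, hp6_11, hp6_12, hp6_13, hp6_14, hp6_15, hp6_16, hp6_17, hp6_18, hp6_19, hp6_20, hp6_21, hp6_22, hp6_23, hp6_24, hp6_25, hp6_26, hp6_27, hp6_28, hp6_29, hp6_30, hp6_31, hp6_32, hp6_33, hp6_34, hp6_35, hp6_36, hp6_37, hp6_38, hp6_39, hp6_40]; ring_nf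

private lemma termE7 {ρ : ℝ} (hρ : 0 < ρ) :
    (1/2) * ρ * ((ρ/2) * h1f ρ + H1d ρ + h2f ρ) = (((1047163920) + (-427502880) * Real.sqrt 6) * ρ ^ 2 + ((-248134992) + (101300688) * Real.sqrt 6) * ρ ^ 4 + ((22007332) + (-8984448) * Real.sqrt 6) * ρ ^ 6 + ((-1058232) + (432048) * Real.sqrt 6) * ρ ^ 8 + ((27287) + (-11118) * Real.sqrt 6) * ρ ^ 10 + ((-345) + (135) * Real.sqrt 6) * ρ ^ 12 + ((15/4)) * ρ ^ 14) / (20 * ρ^7 * (6 * Real.sqrt 6 - 14 + ρ^2)^4) := by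
  have hD := (hD_pos ρ).ne'
  have hρ' := hρ.ne'
  unfold h1f H1d h2f
  have hD' : Real.sqrt 6 * 6 - 14 + ρ^2 ≠ 0 := by rw [mul_comm]; exact hD
  field_simp
  ring_nf; simp only [hs2, hp6_3, hp6_4, hp6_5, hp6_6, hp6_7, hp6_8, hp6_9, hp6_10, hp6_11, hp6_12, hp6_13, hp6_14, hp6_15, hp6_16, hp6_17, hp6_18, hp6_19, hp6_20, hp6_21, hp6_22, hp6_23, hp6_24, hp6_25, hp6_26, hp6_27, hp6_28, hp6_29, hp6_30, hp6_31, hp6_32, hp6_33, hp6_34, hp6_35, hp6_36, hp6_37, hp6_38, hp6_39, hp6_40]; ring_nf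

private lemma termE8 {ρ : ℝ} (hρ : 0 < ρ) :
    Vpot ρ * h1f ρ = (((-429038208) + (175154112) * Real.sqrt 6) * ρ ^ 2 + ((55322496) + (-22585344) * Real.sqrt 6) * ρ ^ 4 + ((-3330240) + (1359360) * Real.sqrt 6) * ρ ^ 6 + ((104352) + (-42528) * Real.sqrt 6) * ρ ^ 8 + ((-360) + (180) * Real.sqrt 6) * ρ ^ 10) / (20 * ρ^7 * (6 * Real.sqrt 6 - 14 + ρ^2)^4) := by
  have hD := (hD_pos ρ).ne'
  have hρ' := hρ.ne'
  rw [Vpot_eq]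
  unfold h1f
  have hD' : Real.sqrt 6 * 6 - 14 + ρ^2 ≠ 0 := by rw [mul_comm]; exact hD
  field_simp
  ring_nf; simp only [hs2, hp6_3, hp6_4, hp6_5, hp6_6, hp6_7, hp6_8, hp6_9, hp6_10, hp6_11, hp6_12, hp6_13, hp6_14, hp6_15, hp6_16, hp6_17, hp6_18, hp6_19, hp6_20, hp6_21, hp6_22, hp6_23, hp6_24, hp6_25, hp6_26, hp6_27, hp6_28, hp6_29, hp6_30, hp6_31, hp6_32, hp6_33, hp6_34, hp6_35, hp6_36, hp6_37, hp6_38, hp6_39, hp6_40]; ring_nf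

private lemma termE9 {ρ : ℝ} (hρ : 0 < ρ) :
    2 * h1f ρ = (((-837731136) + (342002304) * Real.sqrt 6) * ρ ^ 2 + ((113378528) + (-46286592) * Real.sqrt 6) * ρ ^ 4 + ((-7871008) + (3213312) * Real.sqrt 6) * ρ ^ 6 + ((289648) + (-118272) * Real.sqrt 6) * ρ ^ 8 + ((-4532) + (1848) * Real.sqrt 6) * ρ ^ 10 + ((30)) * ρ ^ 12) / (20 * ρ^7 * (6 * Real.sqrt 6 - 14 + ρ^2)^4) := by
  have hD := (hD_pos ρ).ne'
  have hρ' := hρ.ne'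
  unfold h1f
  have hD' : Real.sqrt 6 * 6 - 14 + ρ^2 ≠ 0 := by rw [mul_comm]; exact hD
  field_simp
  ring_nf; simp only [hs2, hp6_3, hp6_4, hp6_5, hp6_6, hp6_7, hp6_8, hp6_9, hp6_10, hp6_11, hp6_12, hp6_13, hp6_14, hp6_15, hp6_16, hp6_17, hp6_18, hp6_19, hp6_20, hp6_21, hp6_22, hp6_23, hp6_24, hp6_25, hp6_26, hp6_27, hp6_28, hp6_29, hp6_30, hp6_31, hp6_32, hp6_33, hp6_34, hp6_35, hp6_36, hp6_37, hp6_38, hp6_39, hp6_40]; ring_nf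

private lemma hBnum (ρ : ℝ) :
    (((-209432784) + (85500576) * Real.sqrt 6) * ρ ^ 2 + ((-76371760) + (31178640) * Real.sqrt 6) * ρ ^ 4 + ((12204564) + (-4982496) * Real.sqrt 6) * ρ ^ 6 + ((-911464) + (372096) * Real.sqrt 6) * ρ ^ 8 + ((35073) + (-14322) * Real.sqrt 6) * ρ ^ 10 + ((-559) + (231) * Real.sqrt 6) * ρ ^ 12 + ((15/4)) * ρ ^ 14) + (((2094327840) + (-855005760) * Real.sqrt 6) * ρ ^ 2 + ((-286837200) + (117100800) * Real.sqrt 6) * ρ ^ 4 + ((15670032) + (-6397248) * Real.sqrt 6) * ρ ^ 6 + ((-543304) + (221856) * Real.sqrt 6) * ρ ^ 8 + ((9650) + (-3900) * Real.sqrt 6) * ρ ^ 10 + ((-45)) * ρ ^ 12) + (((-12565967040) + (5130034560) * Real.sqrt 6) + ((1731195840) + (-706757760) * Real.sqrt 6) * ρ ^ 2 + ((-90957984) + (37133376) * Real.sqrt 6) * ρ ^ 4 + ((2290752) + (-935328) * Real.sqrt 6) * ρ ^ 6 + ((-52860) + (21240) * Real.sqrt 6) * ρ ^ 8 + ((180))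 * ρ ^ 10) + (((197296) + (-80544) * Real.sqrt 6) * ρ ^ 8 + ((-13744) + (5616) * Real.sqrt 6) * ρ ^ 10 + ((244) + (-96) * Real.sqrt 6) * ρ ^ 12) + (((109952) + (-44928) * Real.sqrt 6) * ρ ^ 8 + ((-3904) + (1536) * Real.sqrt 6) * ρ ^ 10) + (((12565967040) + (-5130034560) * Real.sqrt 6) + ((-2977619904) + (1215608256) * Real.sqrt 6) * ρ ^ 2 + ((264087984) + (-107813376) * Real.sqrt 6) * ρ ^ 4 + ((-12698784) + (5184576) * Real.sqrt 6) * ρ ^ 6 + ((327444) + (-133416) * Real.sqrt 6) * ρ ^ 8 + ((-4140) + (1620) * Real.sqrt 6) * ρ ^ 10 + ((45)) * ρ ^ 12) - (((1047163920) + (-427502880) * Real.sqrt 6) * ρ ^ 2 + ((-248134992) + (101300688) * Real.sqrt 6) * ρ ^ 4 + ((22007332) + (-8984448) * Real.sqrt 6) * ρ ^ 6 + ((-1058232) + (432048) * Real.sqrt 6) * ρ ^ 8 + ((27287) + (-11118) * Real.sqrt 6) * ρ ^ 10 + ((-345) + (135) * Real.sqrt 6) * ρ ^ 12 + ((15/4))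 * ρ ^ 14) + (((-429038208) + (175154112) * Real.sqrt 6) * ρ ^ 2 + ((55322496) + (-22585344) * Real.sqrt 6) * ρ ^ 4 + ((-3330240) + (1359360) * Real.sqrt 6) * ρ ^ 6 + ((104352) + (-42528) * Real.sqrt 6) * ρ ^ 8 + ((-360) + (180) * Real.sqrt 6) * ρ ^ 10) - (((-837731136) + (342002304) * Real.sqrt 6) * ρ ^ 2 + ((113378528) + (-46286592) * Real.sqrt 6) * ρ ^ 4 + ((-7871008) + (3213312) * Real.sqrt 6) * ρ ^ 6 + ((289648) + (-118272) * Real.sqrt 6) * ρ ^ 8 + ((-4532) + (1848) * Real.sqrt 6) * ρ ^ 10 + ((30)) * ρ ^ 12) = (0:ℝ) := by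
  ring

private lemma ode_hB {ρ : ℝ} (hρ : 0 < ρ) :
    ((1/2 + ρ^2/4) * h1f ρ + ρ * H1d ρ + H1dd ρ + (ρ/2) * h2f ρ + 2 * H2d ρ)
      + (6/ρ) * ((ρ/2) * h1f ρ + H1d ρ + h2f ρ)
      - (1/2) * ρ * ((ρ/2) * h1f ρ + H1d ρ + h2f ρ)
      + Vpot ρ * h1f ρ - 2 * h1f ρ = 0 := by
  linear_combination termE1 hρ + termE2 hρ + termE3 hρ + termE4 hρ + termE5 hρ + termE6 hρ
    - termE7 hρ + termE8 hρ - termE9 hρ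
    + (1 / (20 * ρ^7 * (6 * Real.sqrt 6 - 14 + ρ^2)^4)) * hBnum ρ

private lemma wr_C {ρ : ℝ} (hρ : 0 < ρ) : gsym ρ * H2d ρ - Gd ρ * h2f ρ = 0 := by
  have hD := (hD_pos ρ).ne'
  rw [gsym_eq, Gd_eq]
  unfold H2d h2f
  have hD' : Real.sqrt 6 * 6 - 14 + ρ^2 ≠ 0 := by rw [mul_comm]; exact hD
  field_simp
  ring_nf

private lemma wr_D {ρ : ℝ} (hρ : 0 < ρ) :
    gsym ρ * ((ρ/2) * h1f ρ + H1d ρ + h2f ρ) - Gd ρ * h1f ρ = 1/ρ^6 := by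
  have hD := (hD_pos ρ).ne'
  have hDp := hD_pos ρ
  have hρ' := hρ.ne'
  rw [gsym_eq, Gd_eq]
  unfold H1d h1f h2f
  have hD' : Real.sqrt 6 * 6 - 14 + ρ^2 ≠ 0 := by rw [mul_comm]; exact hD
  field_simp
  ring_nf; simp only [hs2, hp6_3, hp6_4, hp6_5, hp6_6, hp6_7, hp6_8, hp6_9, hp6_10, hp6_11, hp6_12, hp6_13, hp6_14, hp6_15, hp6_16, hp6_17, hp6_18, hp6_19, hp6_20, hp6_21, hp6_22, hp6_23, hp6_24, hp6_25, hp6_26, hp6_27, hp6_28, hp6_29, hp6_30, hp6_31, hp6_32, hp6_33, hp6_34, hp6_35, hp6_36, hp6_37, hp6_38, hp6_39, hp6_40]; ring_nf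
/-- Both `𝐠` and `𝐡` solve `u'' + (6/ρ)u' − (1/2)ρu' + Vu − 2u = 0` on `(0,∞)`, and their
Wronskian is `W(𝐠,𝐡)(ρ) = 𝐠𝐡' − 𝐠'𝐡 = ρ^{−6} e^{ρ²/4}`. -/

theorem stmt14 :
    (∀ ρ : ℝ, 0 < ρ →
      deriv (deriv gsym) ρ + (6/ρ) * deriv gsym ρ - (1/2) * ρ * deriv gsym ρ
        + Vpot ρ * gsym ρ - 2 * gsym ρ = 0) ∧
    (∀ ρ : ℝ, 0 < ρ →
      deriv (deriv hsym) ρ + (6/ρ) * deriv hsym ρ - (1/2) * ρ * deriv hsym ρ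
        + Vpot ρ * hsym ρ - 2 * hsym ρ = 0) ∧
    (∀ ρ : ℝ, 0 < ρ →
      gsym ρ * deriv hsym ρ - deriv gsym ρ * hsym ρ = Real.exp (ρ^2/4) / ρ^6) := by
  have hdg : deriv gsym = Gd := funext fun x => (hasDerivAt_gsym x).deriv
  have hdh : ∀ {ρ : ℝ}, 0 < ρ → deriv hsym ρ = Hd ρ := fun h => (hasDerivAt_hsym h).deriv
  have hddh : ∀ {ρ : ℝ}, 0 < ρ → deriv (deriv hsym) ρ = Hdd ρ := by
    intro ρ hρ
    have hev : deriv hsym =ᶠ[nhds ρ] Hd := by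
      filter_upwards [Ioi_mem_nhds hρ] with x hx
      exact (hasDerivAt_hsym hx).deriv
    rw [hev.deriv_eq]
    exact (hasDerivAt_Hd hρ).deriv
  refine ⟨fun ρ hρ => ?_, fun ρ hρ => ?_, fun ρ hρ => ?_⟩
  · rw [hdg, (hasDerivAt_Gd ρ).deriv]
    exact ode_g hρ
  · rw [hddh hρ, hdh hρ, hsym_eq]
    have hA := ode_hA hρ
    have hB := ode_hB hρ
    unfold Hdd Hd
    linear_combination Real.exp (ρ^2/4) * hB + Iint ρ * hA
  · rw [hdh hρ, hdg, hsym_eq]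
    have hC := wr_C hρ
    have hD := wr_D hρ
    unfold Hd
    have h6 : Real.exp (ρ^2/4) / ρ^6 = Real.exp (ρ^2/4) * (1/ρ^6) := by ring
    rw [h6]
    linear_combination Real.exp (ρ^2/4) * hD + Iint ρ * hC

end
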